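/- For every m ∈ ℕ, the Hermite function ψ_{2m+1} of odd index 2m+1 is an eigenfunction of the one-dimensional real Fourier transform with eigenvalue (−1)^{m+1}: F_R[ψ_{2m+1}] = (−1)^{m+1} ψ_{2m+1}. -/

import Mathlib

open MeasureTheory Real Polynomial
open scoped FourierTransform


noncomputable def realFourier1 (f : ℝ → ℝ) (y : ℝ) : ℝ :=
  (2 * π) ^ (-(1 : ℝ) / 2) * ∫ x, f x * (Real.cos (y * x) - Real.sin (y * x))

noncomputable def hermiteFun (k : ℕ) (x : ℝ) : ℝ :=
  ((-1 : ℝ) ^ k / Real.sqrt (2 ^ k * (Nat.factorial k) * Real.sqrt π)) *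
    Real.exp (x ^ 2 / 2) * (deriv^[k] (fun t : ℝ => Real.exp (-t ^ 2)) x)

noncomputable def hHP : ℕ → Polynomial ℝ
  | 0 => 1
  | (k+1) => (hHP k).derivative - Polynomial.C 2 * Polynomial.X * hHP k

lemma hasDerivAt_polyGauss1 (Q : Polynomial ℝ) (x : ℝ) :
    HasDerivAt (fun t : ℝ => Q.eval t * Real.exp (-t ^ 2))
      ((Q.derivative.eval x - 2 * x * Q.eval x) * Real.exp (-x ^ 2)) x := by
  have h := (Q.hasDerivAt x).mul ((hasDerivAt_pow 2 x).neg.exp)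
  exact h.congr_deriv (by simp only [Pi.neg_apply]; norm_num; ring)

lemma hasDerivAt_polyGaussHalf (Q : Polynomial ℝ) (x : ℝ) :
    HasDerivAt (fun t : ℝ => Q.eval t * Real.exp (-(t ^ 2 / 2)))
      ((Q.derivative.eval x - x * Q.eval x) * Real.exp (-(x ^ 2 / 2))) x := by
  have h := (Q.hasDerivAt x).mul (((hasDerivAt_pow 2 x).div_const 2).neg.exp)
  exact h.congr_deriv (by simp only [Pi.neg_apply]; norm_num; ring)

lemma derivIter (k : ℕ) (x : ℝ) :
    deriv^[k] (fun t : ℝ => Real.exp (-t ^ 2)) x = (hHP k).eval x * Real.exp (-x ^ 2) := by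
  induction k generalizing x with
  | zero => simp [hHP]
  | succ k ih =>
      rw [Function.iterate_succ_apply']
      have hfun : deriv^[k] (fun t : ℝ => Real.exp (-t ^ 2))
          = fun x => (hHP k).eval x * Real.exp (-x ^ 2) := funext ih
      rw [hfun]
      rw [(hasDerivAt_polyGauss1 (hHP k) x).deriv]
      simp only [hHP, Polynomial.eval_sub, Polynomial.eval_mul, Polynomial.eval_C,
        Polynomial.eval_X]

lemma integrable_polyGauss {b : ℝ} (hb : 0 < b) (Q : Polynomial ℝ) :
    Integrable fun x : ℝ => Q.eval x * Real.exp (-b * x ^ 2) := by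
  induction Q using Polynomial.induction_on' with
  | add p q hp hq => simpa [add_mul, Pi.add_def] using hp.add hq
  | monomial n a =>
      simp only [Polynomial.eval_monomial]
      have h : Integrable fun x : ℝ => x ^ n * Real.exp (-b * x ^ 2) := by
        have h2 := integrable_rpow_mul_exp_neg_mul_sq hb
          (s := (n : ℝ)) (by
          have : (0:ℝ) ≤ (n:ℝ) := Nat.cast_nonneg n
          linarith)
        simpa [Real.rpow_natCast] using h2
      simpa [mul_assoc] using h.const_mul a

lemma integrable_polyGaussHalf (Q : Polynomial ℝ) :
    Integrable fun x : ℝ => Q.eval x * Real.exp (-(x ^ 2 / 2)) := by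
  have h := integrable_polyGauss (b := 1/2) (by norm_num) Q
  have e : (fun x : ℝ => Q.eval x * Real.exp (-(1/2 : ℝ) * x ^ 2))
      = fun x : ℝ => Q.eval x * Real.exp (-(x ^ 2 / 2)) := by
    funext x; ring_nf
  rwa [e] at h

noncomputable def hFk (k : ℕ) : ℝ → ℂ :=
  fun x => ((hHP k).eval x * Real.exp (-(x ^ 2 / 2)) : ℝ)

lemma integrable_hFk (k : ℕ) : Integrable (hFk k) :=
  (integrable_polyGaussHalf (hHP k)).ofReal

lemma sqrt_two_pi_pos : 0 < Real.sqrt (2 * π) :=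
  Real.sqrt_pos.mpr (by positivity)

lemma fourier_hFk_zero :
    𝓕 (hFk 0) = fun y : ℝ => (Real.sqrt (2 * π) : ℂ) * hFk 0 (2 * π * y) := by
  have hb : (0:ℝ) < (2*π)⁻¹ := by positivity
  have h := fourier_gaussian_pi (b := (((2*π)⁻¹ : ℝ) : ℂ)) (by simpa using hb)
  have hfun : (fun x : ℝ => Complex.exp (-π * (((2*π)⁻¹ : ℝ) : ℂ) * x ^ 2)) = hFk 0 := by
    funext x
    rw [hFk]
    simp only [hHP, Polynomial.eval_one, one_mul]
    rw [Complex.ofReal_exp]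
    congr 1
    have hpi : ((π:ℝ):ℂ) ≠ 0 := Complex.ofReal_ne_zero.mpr Real.pi_ne_zero
    push_cast
    field_simp
  rw [hfun] at h
  rw [h]
  funext t
  rw [hFk]; simp only [hHP, Polynomial.eval_one, one_mul]
  have h1 : ((((2*π)⁻¹ : ℝ) : ℂ)) ^ (1/2 : ℂ) = (((Real.sqrt (2*π))⁻¹ : ℝ) : ℂ) := by
    have h2 := Complex.ofReal_cpow hb.le (1/2 : ℝ)
    rw [← Real.sqrt_eq_rpow, Real.sqrt_inv,
      show ((1/2:ℝ):ℂ) = (1/2:ℂ) by norm_num] at h2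
    exact h2.symm
  rw [h1]
  have h3 : Complex.exp (-(π:ℂ) / (((2*π)⁻¹ : ℝ) : ℂ) * (t:ℂ) ^ 2)
      = ((Real.exp (-((2*π*t) ^ 2 / 2)) : ℝ) : ℂ) := by
    rw [Complex.ofReal_exp]
    congr 1
    have hpi : ((π:ℝ):ℂ) ≠ 0 := Complex.ofReal_ne_zero.mpr Real.pi_ne_zero
    push_cast
    field_simp
  rw [h3]
  rw [one_div, Complex.ofReal_inv, inv_inv]

lemma integrable_kernel {f : ℝ → ℂ} (hf : Integrable f) (y : ℝ) :
    Integrable fun x : ℝ => Complex.exp (↑(-2 * π * x * y) * Complex.I) * f x := by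
  refine hf.bdd_mul (c := 1) ?_ (ae_of_all _ fun x => ?_)
  · apply Continuous.aestronglyMeasurable
    exact Complex.continuous_exp.comp ((Complex.continuous_ofReal.comp (by continuity)).mul
      continuous_const)
  · simp [Complex.norm_exp]

lemma fourierIntegral_sub' {f g : ℝ → ℂ} (hf : Integrable f) (hg : Integrable g) :
    𝓕 (fun x => f x - g x) = fun y => 𝓕 f y - 𝓕 g y := by
  funext y
  simp_rw [Real.fourier_real_eq_integral_exp_smul, smul_eq_mul, mul_sub]
  exact integral_sub (integrable_kernel hf y) (integrable_kernel hg y)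

lemma fourierIntegral_const_mul' (f : ℝ → ℂ) (c : ℂ) :
    𝓕 (fun x => c * f x) = fun y => c * 𝓕 f y := by
  funext y
  simp_rw [Real.fourier_real_eq_integral_exp_smul, smul_eq_mul]
  rw [← MeasureTheory.integral_const_mul]
  congr 1; funext x; ring

lemma fourier_hFk (k : ℕ) :
    𝓕 (hFk k) = fun y : ℝ =>
      (-Complex.I) ^ k * (Real.sqrt (2 * π) : ℂ) * hFk k (2 * π * y) := by
  induction k with
  | zero => simpa using fourier_hFk_zero
  | succ k ih =>
      set c : ℂ := (-Complex.I) ^ k * (Real.sqrt (2 * π) : ℂ) with hc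
      set Q := hHP k with hQ
      have hder : ∀ x : ℝ, HasDerivAt (hFk k)
          ((((Q.derivative.eval x - x * Q.eval x) * Real.exp (-(x ^ 2 / 2))) : ℝ) : ℂ) x := by
        intro x
        exact (hasDerivAt_polyGaussHalf Q x).ofReal_comp
      have hDiff : Differentiable ℝ (hFk k) := fun x => (hder x).differentiableAt
      have hderiv : deriv (hFk k)
          = fun x => ((((Q.derivative - Polynomial.X * Q).eval x
              * Real.exp (-(x ^ 2 / 2))) : ℝ) : ℂ) := by
        funext x
        rw [(hder x).deriv]
        simp [Polynomial.eval_sub, Polynomial.eval_mul]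
      have hInt : Integrable (hFk k) := integrable_hFk k
      have hInt' : Integrable (deriv (hFk k)) := by
        rw [hderiv]; exact (integrable_polyGaussHalf _).ofReal
      have hxsmul : (fun x : ℝ => x • hFk k x)
          = fun x : ℝ => ((((Polynomial.X * Q).eval x * Real.exp (-(x ^ 2 / 2))) : ℝ) : ℂ) := by
        funext x
        rw [hFk, Complex.real_smul]
        push_cast [Polynomial.eval_mul, Polynomial.eval_X]
        ring
      have hIntX : Integrable (fun x : ℝ => x • hFk k x) := by
        rw [hxsmul]; exact (integrable_polyGaussHalf _).ofReal
      have hsplit : hFk (k+1) = fun x => deriv (hFk k) x - x • hFk k x := by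
        funext x
        rw [congrFun hderiv x, congrFun hxsmul x, hFk, ← Complex.ofReal_sub]
        congr 1
        simp only [hHP, ← hQ, Polynomial.eval_sub, Polynomial.eval_mul, Polynomial.eval_C,
          Polynomial.eval_X]
        ring
      have h1 : 𝓕 (deriv (hFk k)) = fun y : ℝ => (2 * π * Complex.I * y) • 𝓕 (hFk k) y :=
        Real.fourier_deriv hInt hDiff hInt'
      have h2 : deriv (𝓕 (hFk k)) = 𝓕 (fun x : ℝ => (-2 * π * Complex.I * x) • hFk k x) :=
        Real.deriv_fourier hInt hIntX
      have hs : ∀ y : ℝ, HasDerivAt (fun y : ℝ => 2 * π * y) (2 * π) y := by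
        intro y; simpa using (hasDerivAt_id y).const_mul (2 * π)
      have hreal : ∀ y : ℝ, HasDerivAt (fun y : ℝ => Q.eval (2*π*y) * Real.exp (-((2*π*y) ^ 2 / 2)))
          ((Q.derivative.eval (2*π*y) - (2*π*y) * Q.eval (2*π*y))
            * Real.exp (-((2*π*y) ^ 2 / 2)) * (2*π)) y := by
        intro y
        exact ((hasDerivAt_polyGaussHalf Q (2*π*y)).comp y (hs y))
      have h4 : ∀ y : ℝ, deriv (𝓕 (hFk k)) y
          = c * ((((Q.derivative.eval (2*π*y) - (2*π*y) * Q.eval (2*π*y))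
              * Real.exp (-((2*π*y) ^ 2 / 2)) * (2*π)) : ℝ) : ℂ) := by
        intro y
        have hD : HasDerivAt (𝓕 (hFk k))
            (c * ((((Q.derivative.eval (2*π*y) - (2*π*y) * Q.eval (2*π*y))
              * Real.exp (-((2*π*y) ^ 2 / 2)) * (2*π)) : ℝ) : ℂ)) y := by
          rw [ih]
          simp only [hFk]
          exact ((hreal y).ofReal_comp).const_mul c
        exact hD.deriv
      have h5 : (fun x : ℝ => (-2 * π * Complex.I * x) • hFk k x)
          = fun x : ℝ => (-2 * π * Complex.I) * (x • hFk k x) := by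
        funext x
        rw [smul_eq_mul, Complex.real_smul]
        ring
      have hne : (-2 * (π:ℂ) * Complex.I) ≠ 0 := by
        simp [Complex.I_ne_zero, Complex.ofReal_ne_zero, Real.pi_ne_zero]
      have hA : ∀ y : ℝ, 𝓕 (fun x : ℝ => x • hFk k x) y
          = Complex.I * (c * ((((Q.derivative.eval (2*π*y) - (2*π*y) * Q.eval (2*π*y))
              * Real.exp (-((2*π*y) ^ 2 / 2))) : ℝ) : ℂ)) := by
        intro y
        apply mul_left_cancel₀ hne
        have h6 : (-2 * (π:ℂ) * Complex.I) * 𝓕 (fun x : ℝ => x • hFk k x) y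
            = deriv (𝓕 (hFk k)) y := by
          rw [h2, h5, fourierIntegral_const_mul']
        rw [h6, h4 y]
        push_cast
        ring_nf
        simp [Complex.I_sq]
        ring
      funext y
      have e1 := congrFun (fourierIntegral_sub' hInt' hIntX) y
      have e2 := congrFun h1 y
      have e3 := congrFun ih y
      conv_lhs => rw [hsplit]
      rw [e1, e2, e3, hA y]
      simp only [hFk, hHP, ← hQ, Polynomial.eval_sub, Polynomial.eval_mul, Polynomial.eval_C,
        Polynomial.eval_X, smul_eq_mul]
      push_cast
      ring

lemma hermiteFun_eq (k : ℕ) (x : ℝ) :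
    hermiteFun k x = ((-1 : ℝ) ^ k / Real.sqrt (2 ^ k * (Nat.factorial k) * Real.sqrt π)) *
      ((hHP k).eval x * Real.exp (-(x ^ 2 / 2))) := by
  have he : Real.exp (x ^ 2 / 2) * Real.exp (-x ^ 2) = Real.exp (-(x ^ 2 / 2)) := by
    rw [← Real.exp_add]; congr 1; ring
  rw [hermiteFun, derivIter k x, mul_assoc,
    show Real.exp (x ^ 2 / 2) * (Polynomial.eval x (hHP k) * Real.exp (-x ^ 2))
      = Polynomial.eval x (hHP k) * (Real.exp (x ^ 2 / 2) * Real.exp (-x ^ 2)) from by ring, he]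

theorem realFourier_hermite_odd (m : ℕ) :
    ∀ y, realFourier1 (hermiteFun (2 * m + 1)) y = (-1 : ℝ) ^ (m + 1) * hermiteFun (2 * m + 1) y := by
  intro y
  set k := 2 * m + 1 with hk
  set N : ℝ := ((-1 : ℝ) ^ k / Real.sqrt (2 ^ k * (Nat.factorial k) * Real.sqrt π)) with hN
  set fk : ℝ → ℝ := fun x => (hHP k).eval x * Real.exp (-(x ^ 2 / 2)) with hfk
  have hIntfk : Integrable fk := integrable_polyGaussHalf (hHP k)
  have hcos : Integrable fun x : ℝ => fk x * Real.cos (y * x) := by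
    refine (hIntfk.bdd_mul (c := 1) ?_ (ae_of_all _ fun x => ?_)).congr (ae_of_all _ fun x => mul_comm _ _)
    · exact (Real.continuous_cos.comp (continuous_const.mul continuous_id)).aestronglyMeasurable
    · simpa using Real.abs_cos_le_one (y * x)
  have hsin : Integrable fun x : ℝ => fk x * Real.sin (y * x) := by
    refine (hIntfk.bdd_mul (c := 1) ?_ (ae_of_all _ fun x => ?_)).congr (ae_of_all _ fun x => mul_comm _ _)
    · exact (Real.continuous_sin.comp (continuous_const.mul continuous_id)).aestronglyMeasurable
    · simpa using Real.abs_sin_le_one (y * x)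
  set A : ℝ := ∫ x, fk x * Real.cos (y * x) with hA
  set B : ℝ := ∫ x, fk x * Real.sin (y * x) with hB
  -- kernel computation
  have hkernel : ∀ x : ℝ, Complex.exp (↑(-2 * π * x * (y / (2 * π))) * Complex.I) • hFk k x
      = (↑(fk x * Real.cos (y * x)) : ℂ) - ↑(fk x * Real.sin (y * x)) * Complex.I := by
    intro x
    have harg : -2 * π * x * (y / (2 * π)) = -(y * x) := by
      field_simp
    rw [harg, smul_eq_mul, Complex.exp_mul_I, ← Complex.ofReal_cos, ← Complex.ofReal_sin,
      Real.cos_neg, Real.sin_neg]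
    show _ = _
    rw [show hFk k x = ((fk x : ℝ) : ℂ) from rfl]
    push_cast
    ring
  have hsplit2 : 𝓕 (hFk k) (y / (2 * π)) = (↑A : ℂ) - ↑B * Complex.I := by
    rw [Real.fourier_real_eq_integral_exp_smul]
    simp_rw [hkernel]
    have hc' : Integrable fun x : ℝ => ((fk x * Real.cos (y * x) : ℝ) : ℂ) := hcos.ofReal
    have hs' : Integrable fun x : ℝ => ((fk x * Real.sin (y * x) : ℝ) : ℂ) * Complex.I :=
      hsin.ofReal.mul_const Complex.I
    have e1 : ∫ x : ℝ, ((fk x * Real.cos (y * x) : ℝ) : ℂ) = ((A : ℝ) : ℂ) := by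
      rw [hA]; exact integral_ofReal
    have e2 : ∫ x : ℝ, ((fk x * Real.sin (y * x) : ℝ) : ℂ) = ((B : ℝ) : ℂ) := by
      rw [hB]; exact integral_ofReal
    rw [integral_sub hc' hs', MeasureTheory.integral_mul_const, e1, e2]
  have h2πy : 2 * π * (y / (2 * π)) = y := by field_simp
  have hF := congrFun (fourier_hFk k) (y / (2 * π))
  rw [h2πy] at hF
  have hpow : (-Complex.I) ^ k = ((-1 : ℝ) ^ m : ℂ) * (-Complex.I) := by
    rw [hk, pow_succ, pow_mul]
    norm_num [Complex.I_sq]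
  rw [hpow] at hF
  have hkey : (↑A : ℂ) - ↑B * Complex.I
      = (↑(0 : ℝ) : ℂ) - ↑((-1 : ℝ) ^ m * (Real.sqrt (2 * π) * fk y)) * Complex.I := by
    rw [← hsplit2, hF]
    rw [show hFk k y = ((fk y : ℝ) : ℂ) from rfl]
    push_cast
    ring
  rw [Complex.ext_iff] at hkey
  obtain ⟨hre, him⟩ := hkey
  simp only [Complex.sub_re, Complex.sub_im, Complex.ofReal_re, Complex.ofReal_im,
    Complex.mul_re, Complex.mul_im, Complex.I_re, Complex.I_im] at hre him
  -- hre : A = 0, him : -B = -(...)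
  have hA0 : A = 0 := by linarith
  have hB0 : B = (-1 : ℝ) ^ m * (Real.sqrt (2 * π) * fk y) := by linarith
  -- now the real computation
  have hint : (∫ x, hermiteFun k x * (Real.cos (y * x) - Real.sin (y * x))) = N * (A - B) := by
    rw [hA, hB, ← integral_sub hcos hsin, ← MeasureTheory.integral_const_mul]
    congr 1
    funext x
    rw [hermiteFun_eq, hN]
    simp only [hfk]
    try ring
  have hhh : hermiteFun k y = N * fk y := by
    rw [hermiteFun_eq]
  rw [realFourier1, hint, hA0, hB0, hhh]
  have hrp : ((2 * π) ^ (-(1 : ℝ) / 2) : ℝ) * Real.sqrt (2 * π) = 1 := by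
    rw [show (-(1 : ℝ) / 2) = -(1 / 2 : ℝ) by norm_num, Real.rpow_neg (by positivity),
      ← Real.sqrt_eq_rpow]
    exact inv_mul_cancel₀ sqrt_two_pi_pos.ne'
  linear_combination (-(-1 : ℝ) ^ m * (N * fk y)) * hrp
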